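/- Let 𝒞 be an abelian category in which every object has only finitely many subobjects (Subobject z finite for every z), and let m be a simple object of 𝒞. Then the endomorphism ring End m = (m ⟶ m) is finite and commutative, i.e. End m is finite and f * g = g * f for all f, g ∈ End m; hence End m is a finite field. -/

import Mathlib

/-!
Sending `f : X ⟶ Y` to its graph `X ⟶ X ⨯ Y` identifies morphisms with certain subobjects of
`X ⨯ Y`, so finitely many subobjects force finitely many morphisms. For a simple `m`, Schur's
lemma makes `End m` a division ring, and a finite division ring is commutative by Wedderburn.
-/

open CategoryTheory Limits

namespace CategoryTheory

variable {C : Type*} [Category C] {X Y : C} [HasBinaryProduct X Y]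

noncomputable def graph (f : X ⟶ Y) : X ⟶ X ⨯ Y := prod.lift (𝟙 X) f

@[simp]
theorem graph_fst (f : X ⟶ Y) : graph f ≫ prod.fst = 𝟙 X := prod.lift_fst _ _

@[simp]
theorem graph_snd (f : X ⟶ Y) : graph f ≫ prod.snd = f := prod.lift_snd _ _

instance mono_graph (f : X ⟶ Y) : Mono (graph f) :=
  mono_of_mono_fac (graph_fst f)

theorem graph_subobject_injective :
    Function.Injective fun f : X ⟶ Y => Subobject.mk (graph f) := by
  intro f g hfg
  have hcomp := Subobject.ofMkLEMk_comp hfg.le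
  have hid : Subobject.ofMkLEMk _ _ hfg.le = 𝟙 X := by
    simpa only [Category.assoc, graph_fst, Category.comp_id] using hcomp =≫ prod.fst
  simpa only [Category.assoc, graph_snd, hid, Category.id_comp] using (hcomp =≫ prod.snd).symm

theorem finite_hom_of_finite_subobject_prod [Finite (Subobject (X ⨯ Y))] : Finite (X ⟶ Y) :=
  Finite.of_injective _ graph_subobject_injective

end CategoryTheory

/-- In an abelian category in which every object has only finitely many subobjects, the
endomorphism ring of a simple object `m` is finite and commutative (hence, being a
division ring by Schur's lemma, a finite field). -/
theorem end_of_simple_finite_and_comm (C : Type*) [Category C] [Abelian C]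
    (hfin : ∀ z : C, Finite (Subobject z)) (m : C) (hm : Simple m) :
    Finite (End m) ∧ ∀ f g : End m, f * g = g * f := by
  have := hfin (m ⨯ m)
  have : Finite (End m) := finite_hom_of_finite_subobject_prod
  exact ⟨this, fun f g => mul_comm f g⟩
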